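/- Let K be a symmetric kernel and G a probability measure, and let K_G be the G-centered kernel. Then for any probability measures F and G, the G-centered kernel generates the same quadratic distance as K: ∬ K_G(s,t) d(F-G)(s) d(F-G)(t) = ∬ K(s,t) d(F-G)(s) d(F-G)(t). Moreover, this common value equals ∬ K_G(s,t) dF(s) dF(t). -/

import Mathlib

/-!
Write `B_K(μ, ν) = ∫ s, ∫ t, K s t ∂ν ∂μ`. Integrating the centered kernel termwise (with
Fubini for the term `∫ u, K u t ∂G`) gives
`B_{K_G}(μ, ν) = B_K(μ, ν) - B_K(μ, G) - B_K(G, ν) + B_K(G, G)`,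
i.e. `B_{K_G}` is `B_K` evaluated at `(μ - G, ν - G)`. Hence `B_{K_G}` vanishes as soon as
one argument is `G`, so the quadratic distance of `K_G` reduces to
`B_{K_G}(F, F) = B_K(F - G, F - G)`.
-/

open MeasureTheory

theorem integral_sub_sub_add_const {X : Type*} [MeasurableSpace X] {μ : Measure X}
    [IsProbabilityMeasure μ] {f g : X → ℝ}
    (hf : Integrable f μ) (hg : Integrable g μ) (c d : ℝ) :
    ∫ x, (f x - g x - c + d) ∂μ = (∫ x, f x ∂μ) - (∫ x, g x ∂μ) - c + d := by
  rw [integral_add (f := fun x => f x - g x - c) ((hf.sub hg).sub (integrable_const c))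
    (integrable_const d), integral_sub (f := fun x => f x - g x) (hf.sub hg)
    (integrable_const c), integral_sub hf hg]
  simp

namespace QuadraticDistance

variable {X : Type*} [MeasurableSpace X]

noncomputable def doubleIntegral (K : X → X → ℝ) (μ ν : Measure X) : ℝ :=
  ∫ s, ∫ t, K s t ∂ν ∂μ

noncomputable def centeredKernel (K : X → X → ℝ) (G : Measure X) (s t : X) : ℝ :=
  K s t - (∫ u, K s u ∂G) - (∫ u, K u t ∂G) + ∫ u, ∫ v, K u v ∂G ∂G

noncomputable def quadraticDistance (K : X → X → ℝ) (F G : Measure X) : ℝ :=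
  doubleIntegral K F F - doubleIntegral K F G - doubleIntegral K G F + doubleIntegral K G G

variable {K : X → X → ℝ} {G μ ν : Measure X}

theorem doubleIntegral_centeredKernel [SFinite G] [IsProbabilityMeasure μ]
    [IsProbabilityMeasure ν]
    (hμν : Integrable (fun p : X × X => K p.1 p.2) (μ.prod ν))
    (hμG : Integrable (fun p : X × X => K p.1 p.2) (μ.prod G))
    (hGν : Integrable (fun p : X × X => K p.1 p.2) (G.prod ν)) :
    doubleIntegral (centeredKernel K G) μ ν =
      doubleIntegral K μ ν - doubleIntegral K μ G - doubleIntegral K G ν +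
        doubleIntegral K G G := by
  set a : X → ℝ := fun s => ∫ u, K s u ∂G
  set b : X → ℝ := fun t => ∫ u, K u t ∂G
  have hb_swap : ∫ t, b t ∂ν = doubleIntegral K G ν := (integral_integral_swap hGν).symm
  have h_inner : ∀ᵐ s ∂μ, ∫ t, centeredKernel K G s t ∂ν =
      (∫ t, K s t ∂ν) - a s - doubleIntegral K G ν + doubleIntegral K G G := by
    filter_upwards [hμν.prod_right_ae] with s hs
    have h_reorder : centeredKernel K G s = fun t => K s t - b t - a s + doubleIntegral K G G :=
      funext fun t => by simp only [centeredKernel, doubleIntegral, a, b]; ring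
    rw [h_reorder, integral_sub_sub_add_const hs hGν.integral_prod_right, hb_swap]
    ring
  rw [doubleIntegral, integral_congr_ae h_inner,
    integral_sub_sub_add_const hμν.integral_prod_left hμG.integral_prod_left]
  rfl

theorem doubleIntegral_centeredKernel_right_self [IsProbabilityMeasure G]
    [IsProbabilityMeasure μ]
    (hμG : Integrable (fun p : X × X => K p.1 p.2) (μ.prod G))
    (hGG : Integrable (fun p : X × X => K p.1 p.2) (G.prod G)) :
    doubleIntegral (centeredKernel K G) μ G = 0 := by
  rw [doubleIntegral_centeredKernel hμG hμG hGG]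
  ring

theorem doubleIntegral_centeredKernel_left_self [IsProbabilityMeasure G]
    [IsProbabilityMeasure ν]
    (hGν : Integrable (fun p : X × X => K p.1 p.2) (G.prod ν))
    (hGG : Integrable (fun p : X × X => K p.1 p.2) (G.prod G)) :
    doubleIntegral (centeredKernel K G) G ν = 0 := by
  rw [doubleIntegral_centeredKernel hGν hGG hGν]
  ring

variable {F : Measure X} [IsProbabilityMeasure F] [IsProbabilityMeasure G]

theorem doubleIntegral_centeredKernel_self
    (hFF : Integrable (fun p : X × X => K p.1 p.2) (F.prod F))
    (hFG : Integrable (fun p : X × X => K p.1 p.2) (F.prod G))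
    (hGF : Integrable (fun p : X × X => K p.1 p.2) (G.prod F)) :
    doubleIntegral (centeredKernel K G) F F = quadraticDistance K F G :=
  doubleIntegral_centeredKernel hFF hFG hGF

theorem quadraticDistance_centeredKernel
    (hFG : Integrable (fun p : X × X => K p.1 p.2) (F.prod G))
    (hGF : Integrable (fun p : X × X => K p.1 p.2) (G.prod F))
    (hGG : Integrable (fun p : X × X => K p.1 p.2) (G.prod G)) :
    quadraticDistance (centeredKernel K G) F G = doubleIntegral (centeredKernel K G) F F := by
  rw [quadraticDistance, doubleIntegral_centeredKernel_right_self hFG hGG,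
    doubleIntegral_centeredKernel_left_self hGF hGG,
    doubleIntegral_centeredKernel_left_self hGG hGG]
  ring

end QuadraticDistance

theorem centered_kernel_same_quadratic_distance_general
    {X : Type*} [MeasurableSpace X]
    (K : X → X → ℝ)
    (F G : Measure X) [IsProbabilityMeasure F] [IsProbabilityMeasure G]
    (hint : ∀ μ ν : Measure X, (μ = F ∨ μ = G) → (ν = F ∨ ν = G) →
      Integrable (fun p : X × X => K p.1 p.2) (μ.prod ν))
    (KG : X → X → ℝ)
    (hKG : ∀ s t, KG s t =
      K s t - (∫ u, K s u ∂G) - (∫ u, K u t ∂G) + ∫ u, ∫ v, K u v ∂G ∂G) :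
    ((∫ s, ∫ t, KG s t ∂F ∂F) - (∫ s, ∫ t, KG s t ∂G ∂F)
        - (∫ s, ∫ t, KG s t ∂F ∂G) + ∫ s, ∫ t, KG s t ∂G ∂G) =
      ((∫ s, ∫ t, K s t ∂F ∂F) - (∫ s, ∫ t, K s t ∂G ∂F)
        - (∫ s, ∫ t, K s t ∂F ∂G) + ∫ s, ∫ t, K s t ∂G ∂G) ∧
    ((∫ s, ∫ t, KG s t ∂F ∂F) - (∫ s, ∫ t, KG s t ∂G ∂F)
        - (∫ s, ∫ t, KG s t ∂F ∂G) + ∫ s, ∫ t, KG s t ∂G ∂G) =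
      ∫ s, ∫ t, KG s t ∂F ∂F := by
  have hFF := hint F F (Or.inl rfl) (Or.inl rfl)
  have hFG := hint F G (Or.inl rfl) (Or.inr rfl)
  have hGF := hint G F (Or.inr rfl) (Or.inl rfl)
  have hGG := hint G G (Or.inr rfl) (Or.inr rfl)
  obtain rfl : KG = QuadraticDistance.centeredKernel K G := funext fun s => funext (hKG s)
  exact ⟨(QuadraticDistance.quadraticDistance_centeredKernel hFG hGF hGG).trans
      (QuadraticDistance.doubleIntegral_centeredKernel_self hFF hFG hGF),
    QuadraticDistance.quadraticDistance_centeredKernel hFG hGF hGG⟩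

/-- The `G`-centered kernel generates the same quadratic distance as `K`, and the
common value equals `∬ K_G(s,t) dF(s) dF(t)`. -/
theorem centered_kernel_same_quadratic_distance
    {X : Type*} [MeasurableSpace X]
    (K : X → X → ℝ) (hKsym : ∀ s t, K s t = K t s)
    (F G : Measure X) [IsProbabilityMeasure F] [IsProbabilityMeasure G]
    (hint : ∀ μ ν : Measure X, (μ = F ∨ μ = G) → (ν = F ∨ ν = G) →
      Integrable (fun p : X × X => K p.1 p.2) (μ.prod ν))
    (KG : X → X → ℝ)
    (hKG : ∀ s t, KG s t =
      K s t - (∫ u, K s u ∂G) - (∫ u, K u t ∂G) + ∫ u, ∫ v, K u v ∂G ∂G) :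
    ((∫ s, ∫ t, KG s t ∂F ∂F) - (∫ s, ∫ t, KG s t ∂G ∂F)
        - (∫ s, ∫ t, KG s t ∂F ∂G) + ∫ s, ∫ t, KG s t ∂G ∂G) =
      ((∫ s, ∫ t, K s t ∂F ∂F) - (∫ s, ∫ t, K s t ∂G ∂F)
        - (∫ s, ∫ t, K s t ∂F ∂G) + ∫ s, ∫ t, K s t ∂G ∂G) ∧
    ((∫ s, ∫ t, KG s t ∂F ∂F) - (∫ s, ∫ t, KG s t ∂G ∂F)
        - (∫ s, ∫ t, KG s t ∂F ∂G) + ∫ s, ∫ t, KG s t ∂G ∂G) =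
      ∫ s, ∫ t, KG s t ∂F ∂F :=
  centered_kernel_same_quadratic_distance_general K F G hint KG hKG
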